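/- Let G be a graph whose automorphism group is trivial and which is prime. Then the only strong homomorphism from G to itself is the identity map. -/
import Mathlib


/-- A set `A` is homogeneous in `G` if every vertex outside of `A` is adjacent to all
vertices of `A` or to none of them. -/
def IsHomogeneousSet {V : Type*} (G : SimpleGraph V) (A : Set V) : Prop :=
  ∀ w ∉ A, (∀ a ∈ A, G.Adj w a) ∨ (∀ a ∈ A, ¬ G.Adj w a)

/-- A finite graph is prime if it has no homogeneous set `A` with `1 < |A| ≤ |V| - 1`. -/
def IsPrimeGraph {V : Type*} [Fintype V] (G : SimpleGraph V) : Prop :=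
  ¬ ∃ A : Finset V, 1 < A.card ∧ A.card ≤ Fintype.card V - 1 ∧
      IsHomogeneousSet G (A : Set V)

theorem stringent_strongHom_id {V : Type*} [Fintype V] (G : SimpleGraph V)
    (haut : ∀ f : G ≃g G, ∀ v, f v = v) (hprime : IsPrimeGraph G)
    (φ : V → V) (hφ : ∀ u v : V, G.Adj u v ↔ G.Adj (φ u) (φ v)) :
    ∀ v, φ v = v := by
  classical
  by_cases hinj : Function.Injective φ
  · have hbij : Function.Bijective φ := Finite.injective_iff_bijective.mp hinj
    let e : G ≃g G := ⟨Equiv.ofBijective φ hbij, fun {a b} => (hφ a b).symm⟩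
    exact haut e
  · -- φ not injective: get a fiber of size ≥ 2
    rw [Function.Injective] at hinj
    push_neg at hinj
    obtain ⟨u₁, u₂, heq, hne⟩ := hinj
    set A : Finset V := Finset.univ.filter (fun x => φ x = φ u₁) with hA
    have hu₁ : u₁ ∈ A := by simp [hA]
    have hu₂ : u₂ ∈ A := by simp [hA, heq]
    have hcard : 1 < A.card := Finset.one_lt_card.mpr ⟨u₁, hu₁, u₂, hu₂, hne⟩
    have hhom : IsHomogeneousSet G (A : Set V) := by
      intro w hw
      by_cases hadj : G.Adj (φ w) (φ u₁)
      · left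
        intro a ha
        simp only [hA, Finset.coe_filter, Set.mem_setOf_eq, Finset.mem_univ, true_and] at ha
        rw [hφ, ha]
        exact hadj
      · right
        intro a ha
        simp only [hA, Finset.coe_filter, Set.mem_setOf_eq, Finset.mem_univ, true_and] at ha
        rw [hφ, ha]
        exact hadj
    have hbig : ¬ A.card ≤ Fintype.card V - 1 := fun h => hprime ⟨A, hcard, h, hhom⟩
    have hAuniv : A = Finset.univ := by
      apply Finset.eq_univ_of_card
      have h1 : Fintype.card V - 1 < A.card := lt_of_not_ge hbig
      have h2 : A.card ≤ Fintype.card V := Finset.card_le_univ A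
      omega
    have hconst : ∀ x, φ x = φ u₁ := by
      intro x
      have : x ∈ A := hAuniv ▸ Finset.mem_univ x
      simpa [hA] using this
    have hempty : ∀ a b, ¬ G.Adj a b := by
      intro a b hab
      rw [hφ, hconst a, hconst b] at hab
      exact G.irrefl hab
    let e : G ≃g G := ⟨Equiv.swap u₁ u₂, fun {a b} =>
      iff_of_false (hempty _ _) (hempty _ _)⟩
    have := haut e u₁
    simp only [e, RelIso.coe_fn_mk, Equiv.swap_apply_left] at this
    exact absurd this.symm hne
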